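/- Let k ≥ 2 and ℓ ≥ 2 be integers. Let T₁ : V^5 → ℝ and T_ℓ : V^{4+ℓ} → ℝ be multilinear maps with the following vanishing property: T₁ (respectively T_ℓ) vanishes on every tuple of distinguished basis vectors except possibly on tuples that are obtained, by permuting the first four entries only, from a tuple of the form (U_0, U_j, U_j, S_j; U_j) or (U_0, U_j, U_j, U_0; U_j) (respectively (U_0, U_j, U_j, S_j; U_j,…,U_j) or (U_0, U_j, U_j, U_0; U_j,…,U_j), with U_j in all of the last ℓ slots) for some 1 ≤ j ≤ k. Assume moreover T₁(U_0,U_j,U_j,S_j;U_j) ≠ 0 for every j. Then for every isomorphism A of the 0-model 𝒱 one has T₁(AU_0,AU_j,AU_j,AS_j;AU_j) ≠ 0 for every j, and Σ_{j=1}^k T_ℓ(AU_0,AU_j,AU_j,AS_j;AU_j,…,AU_j) / (T₁(AU_0,AU_j,AU_j,AS_j;AU_j))^ℓ = Σ_{j=1}^k T_ℓ(U_0,U_j,U_j,S_j;U_j,…,U_j) / (T₁(U_0,U_j,U_j,S_j;U_j))^ℓ. (This is the algebraic content of the assertion that β_ℓ is an ℓ-model invariant, i.e., independent of the normalized basis chosen.)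 -/

import Mathlib

open Finset

/-- Index type for the distinguished basis of `V = ℝ^{3k+2}`:
`Sum.inl i ↔ U_i` (0 ≤ i ≤ k), `Sum.inr (Sum.inl i) ↔ V_i` (0 ≤ i ≤ k),
`Sum.inr (Sum.inr i) ↔ S_{i+1}` (1 ≤ i+1 ≤ k). -/
abbrev Idx (k : ℕ) := Fin (k+1) ⊕ (Fin (k+1) ⊕ Fin k)

abbrev Model (k : ℕ) := Idx k → ℝ

/-- The distinguished basis vector `U_i`. -/
def U (k : ℕ) (i : Fin (k+1)) : Model k := Pi.single (Sum.inl i) 1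

/-- The distinguished basis vector `V_i`. -/
def Vb (k : ℕ) (i : Fin (k+1)) : Model k := Pi.single (Sum.inr (Sum.inl i)) 1

/-- The distinguished basis vector `S_{i+1}`. -/
def S (k : ℕ) (i : Fin k) : Model k := Pi.single (Sum.inr (Sum.inr i)) 1

/-- The inner product `(·,·)` with `(U_0,V_0) = (U_i,V_i) = 1`, `(S_i,S_i) = ε_i`. -/
def ip (k : ℕ) (ε : Fin k → ℝ) (x y : Model k) : ℝ :=
  (∑ i : Fin (k+1),
    (x (Sum.inl i) * y (Sum.inr (Sum.inl i)) + x (Sum.inr (Sum.inl i)) * y (Sum.inl i)))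
  + ∑ i : Fin k, ε i * x (Sum.inr (Sum.inr i)) * y (Sum.inr (Sum.inr i))

/-- `A_i(x,y) = x_{U_0} y_{U_i} - x_{U_i} y_{U_0}`. -/
def Af (k : ℕ) (i : Fin k) (x y : Model k) : ℝ :=
  x (Sum.inl 0) * y (Sum.inl i.succ) - x (Sum.inl i.succ) * y (Sum.inl 0)

/-- `B_i(x,y) = x_{U_i} y_{S_i} - x_{S_i} y_{U_i}`. -/
def Bf (k : ℕ) (i : Fin k) (x y : Model k) : ℝ :=
  x (Sum.inl i.succ) * y (Sum.inr (Sum.inr i)) - x (Sum.inr (Sum.inr i)) * y (Sum.inl i.succ)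

/-- The algebraic curvature tensor `R` of the 0-model. -/
def Rt (k : ℕ) (x y z w : Model k) : ℝ :=
  ∑ i : Fin k, (Af k i x y * Bf k i z w + Bf k i x y * Af k i z w)

/-- `A_V = ker R`. -/
def AV (k : ℕ) : Set (Model k) := {ξ | ∀ x y z, Rt k ξ x y z = 0}

/-- `A_{S,V} = A_V^⊥`. -/
def ASV (k : ℕ) (ε : Fin k → ℝ) : Set (Model k) := {η | ∀ ξ ∈ AV k, ip k ε η ξ = 0}

/-- The distinguished basis vector of `V` with index `idx`. -/
def e (k : ℕ) (idx : Idx k) : Model k := Pi.single idx 1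

/-- The index tuple `(U_0, U_j, U_j, S_j)`. -/
def tS (k : ℕ) (j : Fin k) : Fin 4 → Idx k :=
  ![Sum.inl 0, Sum.inl j.succ, Sum.inl j.succ, Sum.inr (Sum.inr j)]

/-- The index tuple `(U_0, U_j, U_j, U_0)`. -/
def tU (k : ℕ) (j : Fin k) : Fin 4 → Idx k :=
  ![Sum.inl 0, Sum.inl j.succ, Sum.inl j.succ, Sum.inl 0]

/-- A tuple of basis indices (4 "curvature" slots plus `ℓ` "covariant derivative" slots)
is *good* if it is obtained, by permuting the first four entries only, from a tuple of the
form `(U_0, U_j, U_j, S_j; U_j, …, U_j)` or `(U_0, U_j, U_j, U_0; U_j, …, U_j)`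
for some `1 ≤ j ≤ k`. -/
def goodTuple (k ℓ : ℕ) (v : Fin 4 ⊕ Fin ℓ → Idx k) : Prop :=
  ∃ (j : Fin k) (π : Equiv.Perm (Fin 4)),
    ((∀ m : Fin 4, v (Sum.inl m) = tS k j (π m)) ∨
     (∀ m : Fin 4, v (Sum.inl m) = tU k j (π m))) ∧
    (∀ m : Fin ℓ, v (Sum.inr m) = Sum.inl j.succ)

/-- The tuple of vectors `(x₀, x₁, x₂, x₃; y, …, y)`. -/
def tup (k ℓ : ℕ) (x₀ x₁ x₂ x₃ y : Model k) : Fin 4 ⊕ Fin ℓ → Model k :=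
  Sum.elim ![x₀, x₁, x₂, x₃] (fun _ => y)

/-!
An isomorphism `A` preserves `ker R = span {V_i}` and hence its orthogonal complement
`span {V_i, S_i}`, so `A S_j` has no `U`-components. Write `c_{ji} = (A U_j)_{U_i}` and
`q_{mi} = (A S_m)_{S_i}`. Since `R(U_j, S_m, ·, ·) = 0` for `j ≠ m`, we get `c_{ji} q_{mi} = 0`,
while `R(A U_0, A U_j, A U_j, A S_j) = 1` forces `c_{ji} q_{ji} ≠ 0` for some `i`. Hence the
nonzero products `c_{ji} q_{ji}` lie on the graph of a permutation `σ`, and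
`(A U_0)_{U_0} c_{jσj}² q_{jσj} = 1`. Expanding `T` in coordinates, the vanishing property leaves a
single basis tuple, so `T(A U_0, A U_j, A U_j, A S_j; A U_j, …) = c_{jσj}^ℓ T(U_0, U_σj, U_σj,
S_σj; U_σj, …)`. The factors `c_{jσj}^ℓ` cancel in the quotient, and `σ` reindexes the sum.
-/

theorem MultilinearMap.apply_eq_sum_prod_mul_single {R ι κ : Type*} [CommSemiring R]
    [Fintype ι] [Fintype κ] [DecidableEq ι] [DecidableEq κ]
    (T : MultilinearMap R (fun _ : ι => κ → R) R) (F : ι → κ → R) :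
    T F = ∑ r : ι → κ, (∏ m, F m (r m)) * T (fun m => Pi.single (r m) 1) := by
  conv_lhs => rw [funext fun m => pi_eq_sum_univ' (F m)]
  simp_rw [T.map_sum, T.map_smul_univ, smul_eq_mul]

theorem Finite.exists_equiv_forall_iff {α : Type*} [Finite α] {P : α → α → Prop}
    (hex : ∀ j, ∃ i, P j i) (hdisj : ∀ j m i, P j i → P m i → j = m) :
    ∃ σ : α ≃ α, ∀ j i, P j i ↔ σ j = i := by
  choose f hf using hex
  have hinj : Function.Injective f := fun j m h => hdisj j m (f j) (hf j) (h ▸ hf m)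
  obtain ⟨hinj, hsurj⟩ := Finite.injective_iff_bijective.mp hinj
  refine ⟨Equiv.ofBijective f ⟨hinj, hsurj⟩, fun j i => ⟨fun h => ?_, fun h => h ▸ hf j⟩⟩
  obtain ⟨m, rfl⟩ := hsurj i
  rw [hdisj j m _ h (hf m)]
  rfl

section Coordinates

variable {k : ℕ}

theorem Rt_U_zero_U_succ (x y : Model k) (i : Fin k) :
    Rt k x y (U k 0) (U k i.succ) = Bf k i x y := by
  simp [Rt, Af, Bf, U, Pi.single_apply, Fin.succ_ne_zero]

theorem Rt_U_succ_S_eq_zero_of_ne {j m : Fin k} (h : j ≠ m) (z w : Model k) :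
    Rt k (U k j.succ) (S k m) z w = 0 := by
  simp [Rt, Af, Bf, U, S, Pi.single_apply, Fin.succ_ne_zero, h.symm]

theorem Rt_U_zero_S_eq_zero (m : Fin k) (z w : Model k) : Rt k (U k 0) (S k m) z w = 0 := by
  simp [Rt, Af, Bf, U, S, Pi.single_apply]

theorem Rt_U_zero_U_U_S (j : Fin k) : Rt k (U k 0) (U k j.succ) (U k j.succ) (S k j) = 1 := by
  simp [Rt, Af, Bf, U, S, Pi.single_apply, Fin.succ_ne_zero]

theorem Rt_eq_sum_of_U_coord_eq_zero {x y z w : Model k} (hw : ∀ i, w (Sum.inl i) = 0) :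
    Rt k x y z w = ∑ i, Af k i x y * (z (Sum.inl i.succ) * w (Sum.inr (Sum.inr i))) := by
  simp [Rt, Af, Bf, hw]

theorem Vb_mem_AV (i : Fin (k + 1)) : Vb k i ∈ AV k := by
  intro x y z
  simp [Rt, Af, Bf, Vb]

theorem S_coord_eq_zero_of_mem_AV {x : Model k} (hx : x ∈ AV k) (i : Fin k) :
    x (Sum.inr (Sum.inr i)) = 0 := by
  simpa [Rt, Af, Bf, U, Pi.single_apply, Fin.succ_ne_zero] using
    hx (U k i.succ) (U k 0) (U k i.succ)

theorem ip_Vb (ε : Fin k → ℝ) (x : Model k) (i : Fin (k + 1)) :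
    ip k ε x (Vb k i) = x (Sum.inl i) := by
  simp [ip, Vb, Pi.single_apply]

theorem ip_S (ε : Fin k → ℝ) (j : Fin k) (x : Model k) :
    ip k ε (S k j) x = ε j * x (Sum.inr (Sum.inr j)) := by
  simp [ip, S, Pi.single_apply]

end Coordinates

section Tuples

variable {k ℓ : ℕ}

theorem tS_comp_perm {π : Equiv.Perm (Fin 4)} (h3 : π 3 = 3) (h1 : π 0 ≠ 1) (h2 : π 0 ≠ 2)
    (j : Fin k) (m : Fin 4) : tS k j (π m) = tS k j m := by
  obtain ⟨h0, h1, h2⟩ : π 0 = 0 ∧ (π 1 = 1 ∨ π 1 = 2) ∧ (π 2 = 1 ∨ π 2 = 2) := by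
    revert π; decide
  fin_cases m
  · simp [h0]
  · rcases h1 with h | h <;> simp [h, tS]
  · rcases h2 with h | h <;> simp [h, tS]
  · simp [h3]

theorem goodTuple.eq_of_coord_ne_zero (hℓ : 0 < ℓ) {x₀ y x₃ : Model k} {j : Fin k}
    (h₀ : ∀ i : Fin k, x₀ (Sum.inl i.succ) = 0) (h₃ : ∀ i, x₃ (Sum.inl i) = 0)
    (hy : ∀ i, y (Sum.inl i.succ) ≠ 0 → x₃ (Sum.inr (Sum.inr i)) ≠ 0 → i = j)
    {r : Fin 4 ⊕ Fin ℓ → Idx k} (hr : goodTuple k ℓ r)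
    (hcoord : ∀ m, tup k ℓ x₀ y y x₃ y m (r m) ≠ 0) :
    r = Sum.elim (tS k j) (fun _ => Sum.inl j.succ) := by
  have hr3 : ∀ i, r (Sum.inl 3) ≠ Sum.inl i := fun i h => hcoord (Sum.inl 3) (by
    simp [tup, h, h₃])
  obtain ⟨j', π, hpat | hpat, hlast⟩ := hr
  swap
  · have := hpat 3
    generalize π 3 = n at this
    fin_cases n <;> exact absurd this (hr3 _)
  have hπ3 : π 3 = 3 := by
    by_contra h
    have := hpat 3
    generalize π 3 = n at this h
    fin_cases n <;> first | exact absurd rfl h | exact absurd this (hr3 _)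
  have hrS : r (Sum.inl 3) = Sum.inr (Sum.inr j') := by rw [hpat 3, hπ3]; rfl
  obtain rfl : j' = j := hy j'
    (by simpa [tup, hlast ⟨0, hℓ⟩] using hcoord (Sum.inr ⟨0, hℓ⟩))
    (by simpa [tup, hrS] using hcoord (Sum.inl 3))
  have hπ0 : ∀ n, π 0 = n → tS k j' n = Sum.inl j'.succ → False := fun n hn h =>
    hcoord (Sum.inl 0) (by simp [tup, hpat 0, hn, h, h₀])
  funext m
  rcases m with m | m
  · rw [hpat m, tS_comp_perm hπ3 (fun h => hπ0 1 h rfl) (fun h => hπ0 2 h rfl)]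
    rfl
  · exact hlast m

theorem tup_U_S_eq_single (j : Fin k) :
    tup k ℓ (U k 0) (U k j.succ) (U k j.succ) (S k j) (U k j.succ)
      = fun m => Pi.single (Sum.elim (tS k j) (fun _ => Sum.inl j.succ) m) 1 := by
  funext m
  rcases m with m | m
  · fin_cases m <;> rfl
  · rfl

theorem apply_tup_eq_of_goodTuple (hℓ : 0 < ℓ)
    {T : MultilinearMap ℝ (fun _ : Fin 4 ⊕ Fin ℓ => Model k) ℝ}
    (hT : ∀ v : Fin 4 ⊕ Fin ℓ → Idx k, ¬ goodTuple k ℓ v → T (fun m => e k (v m)) = 0)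
    {x₀ y x₃ : Model k} {j : Fin k}
    (h₀ : ∀ i : Fin k, x₀ (Sum.inl i.succ) = 0) (h₃ : ∀ i, x₃ (Sum.inl i) = 0)
    (hy : ∀ i, y (Sum.inl i.succ) ≠ 0 → x₃ (Sum.inr (Sum.inr i)) ≠ 0 → i = j)
    (hnorm : x₀ (Sum.inl 0) * y (Sum.inl j.succ) ^ 2 * x₃ (Sum.inr (Sum.inr j)) = 1) :
    T (tup k ℓ x₀ y y x₃ y) = y (Sum.inl j.succ) ^ ℓ
      * T (tup k ℓ (U k 0) (U k j.succ) (U k j.succ) (S k j) (U k j.succ)) := by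
  classical
  set r₀ : Fin 4 ⊕ Fin ℓ → Idx k := Sum.elim (tS k j) fun _ => Sum.inl j.succ
  have hprod : ∏ m, tup k ℓ x₀ y y x₃ y m (r₀ m) = y (Sum.inl j.succ) ^ ℓ := by
    rw [Fintype.prod_sum_type, Fin.prod_univ_four]
    simp only [r₀, tup, tS, Sum.elim_inl, Sum.elim_inr, Matrix.cons_val_zero, Matrix.cons_val_one,
      Matrix.cons_val, prod_const, card_univ, Fintype.card_fin]
    linear_combination y (Sum.inl j.succ) ^ ℓ * hnorm
  rw [T.apply_eq_sum_prod_mul_single, Finset.sum_eq_single r₀, hprod, tup_U_S_eq_single]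
  · intro r _ hr
    by_cases hgood : goodTuple k ℓ r
    · obtain ⟨m, hm⟩ : ∃ m, tup k ℓ x₀ y y x₃ y m (r m) = 0 := by
        by_contra! h
        exact hr (hgood.eq_of_coord_ne_zero hℓ h₀ h₃ hy h)
      rw [Finset.prod_eq_zero (Finset.mem_univ m) hm, zero_mul]
    · rw [show T (fun m => Pi.single (r m) 1) = 0 from hT r hgood, mul_zero]
  · simp

end Tuples

structure IsModelIso (k : ℕ) (ε : Fin k → ℝ) (A : Model k ≃ₗ[ℝ] Model k) : Prop where
  ip_map : ∀ x y, ip k ε (A x) (A y) = ip k ε x y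
  Rt_map : ∀ x y z w, Rt k (A x) (A y) (A z) (A w) = Rt k x y z w

namespace IsModelIso

variable {k : ℕ} {ε : Fin k → ℝ} {A : Model k ≃ₗ[ℝ] Model k}

theorem symm (hA : IsModelIso k ε A) : IsModelIso k ε A.symm where
  ip_map x y := by simpa using (hA.ip_map (A.symm x) (A.symm y)).symm
  Rt_map x y z w := by
    simpa using (hA.Rt_map (A.symm x) (A.symm y) (A.symm z) (A.symm w)).symm

theorem map_mem_AV (hA : IsModelIso k ε A) {x : Model k} (hx : x ∈ AV k) : A x ∈ AV k := by
  intro y z w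
  simpa [hx (A.symm y) (A.symm z) (A.symm w)] using
    hA.Rt_map x (A.symm y) (A.symm z) (A.symm w)

theorem map_S_apply_inl (hA : IsModelIso k ε A) (j : Fin k) (i : Fin (k + 1)) :
    A (S k j) (Sum.inl i) = 0 := by
  rw [← ip_Vb ε (A (S k j)) i, ← A.apply_symm_apply (Vb k i), hA.ip_map, ip_S,
    S_coord_eq_zero_of_mem_AV (hA.symm.map_mem_AV (Vb_mem_AV i)), mul_zero]

theorem map_apply_inl_succ_mul_map_S_apply_eq_zero (hA : IsModelIso k ε A) {x : Model k}
    {m : Fin k} (hx : ∀ z w, Rt k x (S k m) z w = 0) (i : Fin k) :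
    A x (Sum.inl i.succ) * A (S k m) (Sum.inr (Sum.inr i)) = 0 := by
  have hB : Bf k i (A x) (A (S k m)) = 0 := by
    rw [← Rt_U_zero_U_succ, ← A.apply_symm_apply (U k 0), ← A.apply_symm_apply (U k i.succ),
      hA.Rt_map, hx]
  simpa [Bf, hA.map_S_apply_inl] using hB

theorem exists_map_U_apply_mul_map_S_apply_ne_zero (hA : IsModelIso k ε A) (j : Fin k) :
    ∃ i, A (U k j.succ) (Sum.inl i.succ) * A (S k j) (Sum.inr (Sum.inr i)) ≠ 0 := by
  by_contra! h
  have h1 := hA.Rt_map (U k 0) (U k j.succ) (U k j.succ) (S k j)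
  simp [Rt_U_zero_U_U_S, Rt_eq_sum_of_U_coord_eq_zero (hA.map_S_apply_inl j), h] at h1

theorem exists_equiv (hA : IsModelIso k ε A) : ∃ σ : Fin k ≃ Fin k, ∀ j i,
    A (U k j.succ) (Sum.inl i.succ) * A (S k j) (Sum.inr (Sum.inr i)) ≠ 0 ↔ σ j = i := by
  refine Finite.exists_equiv_forall_iff hA.exists_map_U_apply_mul_map_S_apply_ne_zero
    fun j m i hj hm => ?_
  by_contra hjm
  exact mul_ne_zero (left_ne_zero_of_mul hj) (right_ne_zero_of_mul hm)
    (hA.map_apply_inl_succ_mul_map_S_apply_eq_zero (Rt_U_succ_S_eq_zero_of_ne hjm) i)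

theorem map_U_zero_apply_inl_succ (hA : IsModelIso k ε A) (i : Fin k) :
    A (U k 0) (Sum.inl i.succ) = 0 := by
  obtain ⟨σ, hσ⟩ := hA.exists_equiv
  have hq := right_ne_zero_of_mul ((hσ (σ.symm i) i).2 (σ.apply_symm_apply i))
  exact (mul_eq_zero.1 (hA.map_apply_inl_succ_mul_map_S_apply_eq_zero
    (Rt_U_zero_S_eq_zero _) i)).resolve_right hq

theorem map_U_zero_mul_sq_mul_map_S_eq_one (hA : IsModelIso k ε A) {σ : Fin k ≃ Fin k}
    (hσ : ∀ j i,
    A (U k j.succ) (Sum.inl i.succ) * A (S k j) (Sum.inr (Sum.inr i)) ≠ 0 ↔ σ j = i)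
    (j : Fin k) :
    A (U k 0) (Sum.inl 0) * A (U k j.succ) (Sum.inl (σ j).succ) ^ 2
      * A (S k j) (Sum.inr (Sum.inr (σ j))) = 1 := by
  have h1 := hA.Rt_map (U k 0) (U k j.succ) (U k j.succ) (S k j)
  rw [Rt_U_zero_U_U_S, Rt_eq_sum_of_U_coord_eq_zero (hA.map_S_apply_inl j),
    Finset.sum_eq_single (σ j)] at h1
  · rw [← h1, Af, hA.map_U_zero_apply_inl_succ]
    ring
  · intro i _ hi
    rw [not_not.1 (mt (hσ j i).1 (Ne.symm hi)), mul_zero]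
  · simp

theorem map_tup_eq (hA : IsModelIso k ε A) {σ : Fin k ≃ Fin k} (hσ : ∀ j i,
    A (U k j.succ) (Sum.inl i.succ) * A (S k j) (Sum.inr (Sum.inr i)) ≠ 0 ↔ σ j = i)
    {ℓ : ℕ} (hℓ : 0 < ℓ) {T : MultilinearMap ℝ (fun _ : Fin 4 ⊕ Fin ℓ => Model k) ℝ}
    (hT : ∀ v : Fin 4 ⊕ Fin ℓ → Idx k, ¬ goodTuple k ℓ v → T (fun m => e k (v m)) = 0)
    (j : Fin k) :
    T (tup k ℓ (A (U k 0)) (A (U k j.succ)) (A (U k j.succ)) (A (S k j)) (A (U k j.succ)))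
      = A (U k j.succ) (Sum.inl (σ j).succ) ^ ℓ
        * T (tup k ℓ (U k 0) (U k (σ j).succ) (U k (σ j).succ) (S k (σ j)) (U k (σ j).succ)) :=
  apply_tup_eq_of_goodTuple hℓ hT hA.map_U_zero_apply_inl_succ (hA.map_S_apply_inl j)
    (fun i hc hq => ((hσ j i).1 (mul_ne_zero hc hq)).symm)
    (hA.map_U_zero_mul_sq_mul_map_S_eq_one hσ j)

end IsModelIso

theorem beta_is_model_invariant_general (k ℓ : ℕ) (hℓ : 2 ≤ ℓ)
    (ε : Fin k → ℝ)
    (T₁ : MultilinearMap ℝ (fun _ : Fin 4 ⊕ Fin 1 => Model k) ℝ)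
    (Tℓ : MultilinearMap ℝ (fun _ : Fin 4 ⊕ Fin ℓ => Model k) ℝ)
    (hT₁ : ∀ v : Fin 4 ⊕ Fin 1 → Idx k, ¬ goodTuple k 1 v → T₁ (fun m => e k (v m)) = 0)
    (hTℓ : ∀ v : Fin 4 ⊕ Fin ℓ → Idx k, ¬ goodTuple k ℓ v → Tℓ (fun m => e k (v m)) = 0)
    (hne : ∀ j : Fin k,
      T₁ (tup k 1 (U k 0) (U k j.succ) (U k j.succ) (S k j) (U k j.succ)) ≠ 0)
    (A : Model k ≃ₗ[ℝ] Model k)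
    (hAip : ∀ x y, ip k ε (A x) (A y) = ip k ε x y)
    (hAR : ∀ x y z w, Rt k (A x) (A y) (A z) (A w) = Rt k x y z w) :
    (∀ j : Fin k,
      T₁ (tup k 1 (A (U k 0)) (A (U k j.succ)) (A (U k j.succ)) (A (S k j))
        (A (U k j.succ))) ≠ 0) ∧
    ∑ j : Fin k,
        Tℓ (tup k ℓ (A (U k 0)) (A (U k j.succ)) (A (U k j.succ)) (A (S k j))
            (A (U k j.succ)))
          / (T₁ (tup k 1 (A (U k 0)) (A (U k j.succ)) (A (U k j.succ)) (A (S k j))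
              (A (U k j.succ)))) ^ ℓ
      = ∑ j : Fin k,
          Tℓ (tup k ℓ (U k 0) (U k j.succ) (U k j.succ) (S k j) (U k j.succ))
            / (T₁ (tup k 1 (U k 0) (U k j.succ) (U k j.succ) (S k j) (U k j.succ))) ^ ℓ := by
  have hA : IsModelIso k ε A := ⟨hAip, hAR⟩
  obtain ⟨σ, hσ⟩ := hA.exists_equiv
  have hc : ∀ j, A (U k j.succ) (Sum.inl (σ j).succ) ≠ 0 :=
    fun j => left_ne_zero_of_mul ((hσ j (σ j)).2 rfl)
  have hT₁A := fun j => (hA.map_tup_eq hσ one_pos hT₁ j).trans (by rw [pow_one])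
  have hTℓA := hA.map_tup_eq hσ (by omega) hTℓ
  refine ⟨fun j => hT₁A j ▸ mul_ne_zero (hc j) (hne (σ j)), ?_⟩
  conv_rhs => rw [← σ.sum_comp]
  refine Finset.sum_congr rfl fun j _ => ?_
  rw [hT₁A, hTℓA, mul_pow, mul_div_mul_left _ _ (pow_ne_zero ℓ (hc j))]

theorem beta_is_model_invariant (k ℓ : ℕ) (hk : 2 ≤ k) (hℓ : 2 ≤ ℓ)
    (ε : Fin k → ℝ) (hε : ∀ i, ε i = 1 ∨ ε i = -1)
    (T₁ : MultilinearMap ℝ (fun _ : Fin 4 ⊕ Fin 1 => Model k) ℝ)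
    (Tℓ : MultilinearMap ℝ (fun _ : Fin 4 ⊕ Fin ℓ => Model k) ℝ)
    (hT₁ : ∀ v : Fin 4 ⊕ Fin 1 → Idx k, ¬ goodTuple k 1 v → T₁ (fun m => e k (v m)) = 0)
    (hTℓ : ∀ v : Fin 4 ⊕ Fin ℓ → Idx k, ¬ goodTuple k ℓ v → Tℓ (fun m => e k (v m)) = 0)
    (hne : ∀ j : Fin k,
      T₁ (tup k 1 (U k 0) (U k j.succ) (U k j.succ) (S k j) (U k j.succ)) ≠ 0)
    (A : Model k ≃ₗ[ℝ] Model k)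
    (hAip : ∀ x y, ip k ε (A x) (A y) = ip k ε x y)
    (hAR : ∀ x y z w, Rt k (A x) (A y) (A z) (A w) = Rt k x y z w) :
    (∀ j : Fin k,
      T₁ (tup k 1 (A (U k 0)) (A (U k j.succ)) (A (U k j.succ)) (A (S k j))
        (A (U k j.succ))) ≠ 0) ∧
    ∑ j : Fin k,
        Tℓ (tup k ℓ (A (U k 0)) (A (U k j.succ)) (A (U k j.succ)) (A (S k j))
            (A (U k j.succ)))
          / (T₁ (tup k 1 (A (U k 0)) (A (U k j.succ)) (A (U k j.succ)) (A (S k j))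
              (A (U k j.succ)))) ^ ℓ
      = ∑ j : Fin k,
          Tℓ (tup k ℓ (U k 0) (U k j.succ) (U k j.succ) (S k j) (U k j.succ))
            / (T₁ (tup k 1 (U k 0) (U k j.succ) (U k j.succ) (S k j) (U k j.succ))) ^ ℓ :=
  beta_is_model_invariant_general k ℓ hℓ ε T₁ Tℓ hT₁ hTℓ hne A hAip hAR
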